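/- arXiv:1909.02506 — 4 statements merged into one kernel-verified Lean document; each statement's English description precedes it below -/
import Mathlib

section
/- (Bernstein inequality for sampling without replacement) Let N ≥ 1, let w be a uniformly random permutation of [N], and let ξ ∈ ℝ^N. Define S_N = Σ_{i=1}^N ξ_i, S̃_n = Σ_{i=1}^n ξ_{w(i)}, σ_N² = (1/N) Σ_i ξ_i² − ((1/N) Σ_i ξ_i)², and U_N = max_i ξ_i − min_i ξ_i. Then for every ε > 0, Pr[| S̃_n/n − S_N/N | > ε] ≤ 2 exp( − n ε² / (2σ_N²apă + ε U_N) ). -/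
/-!
Chernoff's method: for `t ≥ 0` the number of permutations whose first `n` centred values have
average above `ε` is at most the sum over `w` of `∏_{i<n} exp (t (x (w i) - ε))`. For nonnegative
`a`, sampling without replacement is dominated by sampling with replacement,
`𝔼_w ∏_{i ∈ s} a (w i) ≤ (𝔼 a) ^ #s`; this goes by induction on `s`, symmetrising over
transpositions. With `exp y ≤ 1 + y + (1/2 + 2c/9) y²` for `y ≤ c ≤ 1`, the mean of `exp (t x)` is
at most `exp ((1/2 + 2tU/9) t² σ²)`, and `t = ε / (σ² + εU)` yields the exponent
`-nε² / (2σ² + εU)`. The lower tail is the upper tail of `-x`.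
-/

open Finset Equiv Real

namespace Real

theorem exp_le_quadratic_of_nonpos {x : ℝ} (hx : x ≤ 0) : exp x ≤ 1 + x + x ^ 2 / 2 := by
  have hP := quadratic_le_exp_of_nonneg (neg_nonneg.2 hx)
  have hinv : exp x * exp (-x) = 1 := by rw [← exp_add, add_neg_cancel, exp_zero]
  nlinarith [exp_pos x, mul_le_mul_of_nonneg_left hP (exp_pos x).le, sq_nonneg (x ^ 2)]

theorem exp_le_cubic_of_nonneg_of_le_one {x : ℝ} (h0 : 0 ≤ x) (h1 : x ≤ 1) :
    exp x ≤ 1 + x + x ^ 2 / 2 + 2 / 9 * x ^ 3 := by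
  have := exp_bound' h0 h1 (n := 3) (by norm_num)
  norm_num [Finset.sum_range_succ, Nat.factorial] at this
  linarith

theorem exp_le_one_add_add_mul_sq {x c : ℝ} (hc0 : 0 ≤ c) (hc1 : c ≤ 1) (hx : x ≤ c) :
    exp x ≤ 1 + x + (1 / 2 + 2 / 9 * c) * x ^ 2 := by
  rcases le_or_gt x 0 with hx0 | hx0
  · nlinarith [exp_le_quadratic_of_nonpos hx0, sq_nonneg x]
  · nlinarith [exp_le_cubic_of_nonneg_of_le_one hx0.le (hx.trans hc1),
      mul_le_mul_of_nonneg_left hx (sq_nonneg x)]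

end Real

theorem Finset.prod_comp_swap {α M : Type*} [DecidableEq α] [CommMonoid M] {s : Finset α}
    {j k : α} (hjk : j ∈ s ↔ k ∈ s) (f : α → M) :
    ∏ i ∈ s, f (swap j k i) = ∏ i ∈ s, f i := by
  refine prod_equiv (swap j k) (fun i => ?_) (fun _ _ => rfl)
  rcases eq_or_ne i j with rfl | hij
  · simpa using hjk
  rcases eq_or_ne i k with rfl | hik
  · simpa using hjk.symm
  rw [swap_apply_of_ne_of_ne hij hik]

section PermProduct

variable {α : Type*} [Fintype α] [DecidableEq α] (a : α → ℝ)

theorem sum_perm_mul_prod_eq_of_mem_iff {s : Finset α} {j k : α} (hjk : j ∈ s ↔ k ∈ s) :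
    ∑ w : Perm α, a (w k) * ∏ i ∈ s, a (w i) = ∑ w : Perm α, a (w j) * ∏ i ∈ s, a (w i) := by
  rw [← Equiv.sum_comp (Equiv.mulRight (swap j k))]
  refine sum_congr rfl fun w _ => ?_
  simp only [coe_mulRight, Perm.coe_mul, Function.comp_apply, swap_apply_right]
  exact congrArg _ (prod_comp_swap hjk (a ∘ w))

theorem sum_perm_mul_prod_le_of_mem (ha : 0 ≤ a) {s : Finset α} {j : α} (hj : j ∈ s) (k : α) :
    ∑ w : Perm α, a (w k) * ∏ i ∈ s, a (w i) ≤ ∑ w : Perm α, a (w j) * ∏ i ∈ s, a (w i) := by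
  by_cases hk : k ∈ s
  · exact (sum_perm_mul_prod_eq_of_mem_iff a (iff_of_true hj hk)).le
  set P : Perm α → ℝ := fun w => ∏ i ∈ s.erase j, a (w i)
  have hP : ∀ w, ∏ i ∈ s, a (w i) = a (w j) * P w := fun w => (mul_prod_erase _ _ hj).symm
  have hPswap : ∀ w, P (w * swap j k) = P w := fun w =>
    prod_comp_swap (iff_of_false (notMem_erase j s) fun h => hk (mem_of_mem_erase h)) (a ∘ w)
  -- symmetrising over `w ↦ w * swap j k` turns the difference into a sum of squares
  have hsym : ∑ w : Perm α, (a (w j) - a (w k)) * (a (w j) * P w)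
      = ∑ w : Perm α, (a (w k) - a (w j)) * (a (w k) * P w) := by
    rw [← Equiv.sum_comp (Equiv.mulRight (swap j k))]
    refine sum_congr rfl fun w _ => ?_
    simp [hPswap]
  have hnonneg : 0 ≤ ∑ w : Perm α, (a (w j) - a (w k)) * (a (w j) * P w) := by
    have h2 : 2 * ∑ w : Perm α, (a (w j) - a (w k)) * (a (w j) * P w)
        = ∑ w : Perm α, (a (w j) - a (w k)) ^ 2 * P w := by
      rw [two_mul]; nth_rw 2 [hsym]; rw [← sum_add_distrib]
      exact sum_congr rfl fun w _ => by ring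
    have : 0 ≤ ∑ w : Perm α, (a (w j) - a (w k)) ^ 2 * P w :=
      sum_nonneg fun w _ => mul_nonneg (sq_nonneg _) (prod_nonneg fun i _ => ha (w i))
    linarith
  rw [← sub_nonneg, ← sum_sub_distrib]
  convert hnonneg using 2 with w
  rw [hP]; ring

/-- Summing `∑ k, a (w k) = ∑ k, a k` over `w`: indices outside `s` contribute as much as `j`,
indices inside `s` at least the average. -/
theorem card_mul_sum_perm_mul_prod_le (ha : 0 ≤ a) {s : Finset α} {j : α} (hj : j ∉ s) :
    Fintype.card α * ∑ w : Perm α, a (w j) * ∏ i ∈ s, a (w i)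
      ≤ (∑ k, a k) * ∑ w : Perm α, ∏ i ∈ s, a (w i) := by
  set M : α → ℝ := fun k => ∑ w : Perm α, a (w k) * ∏ i ∈ s, a (w i)
  set p := (∑ k, a k) * ∑ w : Perm α, ∏ i ∈ s, a (w i)
  have hp : p = ∑ k, M k :=
    calc p = ∑ w : Perm α, ∑ k, a (w k) * ∏ i ∈ s, a (w i) := by
          simp only [p]; rw [mul_sum]
          exact sum_congr rfl fun w _ => by rw [← sum_mul, Equiv.sum_comp w a]
      _ = ∑ k, M k := sum_comm
  have hout : ∀ k ∈ sᶜ, M k = M j := fun k hk =>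
    sum_perm_mul_prod_eq_of_mem_iff a (iff_of_false hj (mem_compl.1 hk))
  have hin : ∀ k ∈ s, p ≤ Fintype.card α * M k := fun k hk => by
    rw [hp, ← card_univ, ← nsmul_eq_mul]
    exact sum_le_card_nsmul _ _ _ fun k' _ => sum_perm_mul_prod_le_of_mem a ha hk k'
  have hsplit : p = ∑ k ∈ s, M k + #sᶜ * M j := by
    rw [hp, ← sum_add_sum_compl s, sum_congr rfl hout, sum_const, nsmul_eq_mul]
  have hcompl : (0 : ℝ) < #sᶜ := by exact_mod_cast card_pos.2 ⟨j, mem_compl.2 hj⟩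
  have hcard : (#s : ℝ) + #sᶜ = Fintype.card α := by exact_mod_cast card_add_card_compl s
  have : #s * p ≤ Fintype.card α * ∑ k ∈ s, M k := by
    rw [mul_sum, ← nsmul_eq_mul, ← sum_const]
    exact sum_le_sum hin
  rw [show ∑ k ∈ s, M k = p - #sᶜ * M j by linarith, ← hcard] at this
  show (Fintype.card α : ℝ) * M j ≤ p
  rw [← hcard]
  exact le_of_mul_le_mul_left (by linarith) hcompl

theorem sum_perm_prod_le (ha : 0 ≤ a) (s : Finset α) :
    ∑ w : Perm α, ∏ i ∈ s, a (w i)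
      ≤ Fintype.card (Perm α) * ((∑ k, a k) / Fintype.card α) ^ #s := by
  induction s using Finset.induction_on with
  | empty => simp [Fintype.card_perm]
  | insert j s hj ih =>
    have hN : (0 : ℝ) < Fintype.card α := by exact_mod_cast Fintype.card_pos_iff.2 ⟨j⟩
    have hmean : 0 ≤ (∑ k, a k) / Fintype.card α := div_nonneg (sum_nonneg fun k _ => ha k) hN.le
    calc ∑ w : Perm α, ∏ i ∈ insert j s, a (w i)
        = ∑ w : Perm α, a (w j) * ∏ i ∈ s, a (w i) := sum_congr rfl fun w _ => prod_insert hj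
      _ ≤ (∑ k, a k) / Fintype.card α * ∑ w : Perm α, ∏ i ∈ s, a (w i) := by
        rw [div_mul_eq_mul_div, le_div_iff₀ hN, mul_comm]
        exact card_mul_sum_perm_mul_prod_le a ha hj
      _ ≤ (∑ k, a k) / Fintype.card α
            * (Fintype.card (Perm α) * ((∑ k, a k) / Fintype.card α) ^ #s) :=
        mul_le_mul_of_nonneg_left ih hmean
      _ = _ := by rw [card_insert_of_notMem hj]; ring

end PermProduct

theorem Finset.card_filter_lt_le_sum_exp {ι : Type*} (s : Finset ι) (f : ι → ℝ) (c : ℝ) {t : ℝ}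
    (ht : 0 ≤ t) : (#{i ∈ s | c < f i} : ℝ) ≤ ∑ i ∈ s, exp (t * (f i - c)) :=
  calc (#{i ∈ s | c < f i} : ℝ) = ∑ i ∈ s with c < f i, 1 := by simp
    _ ≤ ∑ i ∈ s with c < f i, exp (t * (f i - c)) := sum_le_sum fun i hi =>
      one_le_exp (mul_nonneg ht (sub_nonneg.2 (mem_filter.1 hi).2.le))
    _ ≤ ∑ i ∈ s, exp (t * (f i - c)) :=
      sum_le_sum_of_subset_of_nonneg (filter_subset _ _) fun _ _ _ => (exp_pos _).le

theorem sum_exp_mul_le_card_add {ι : Type*} [Fintype ι] (x : ι → ℝ) (hx : ∑ i, x i = 0)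
    {t c : ℝ} (hc0 : 0 ≤ c) (hc1 : c ≤ 1) (htx : ∀ i, t * x i ≤ c) :
    ∑ i, exp (t * x i) ≤ Fintype.card ι + (1 / 2 + 2 / 9 * c) * t ^ 2 * ∑ i, x i ^ 2 :=
  calc ∑ i, exp (t * x i) ≤ ∑ i, (1 + t * x i + (1 / 2 + 2 / 9 * c) * (t * x i) ^ 2) :=
        sum_le_sum fun i _ => exp_le_one_add_add_mul_sq hc0 hc1 (htx i)
    _ = _ := by
        simp only [sum_add_distrib, ← mul_sum, hx, mul_pow, sum_const, card_univ, nsmul_one]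
        ring

theorem bernstein_exponent_le {σ2 U ε : ℝ} (hσ : 0 ≤ σ2) (hU : 0 ≤ U) (hε : 0 < ε)
    (hD : 0 < 2 * σ2 + ε * U) {t : ℝ} (ht : t = ε / (σ2 + ε * U)) :
    (1 / 2 + 2 / 9 * (t * U)) * t ^ 2 * σ2 - t * ε ≤ -(ε ^ 2 / (2 * σ2 + ε * U)) := by
  have hA : 0 < σ2 + ε * U := by nlinarith [mul_nonneg hε.le hU]
  have key : -(ε ^ 2 / (2 * σ2 + ε * U)) - ((1 / 2 + 2 / 9 * (t * U)) * t ^ 2 * σ2 - t * ε)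
      = ε ^ 2 * σ2 * (ε * U) * (σ2 + 5 * (ε * U))
        / (18 * (σ2 + ε * U) ^ 3 * (2 * σ2 + ε * U)) := by
    subst ht
    field_simp
    ring
  have : 0 ≤ ε ^ 2 * σ2 * (ε * U) * (σ2 + 5 * (ε * U))
      / (18 * (σ2 + ε * U) ^ 3 * (2 * σ2 + ε * U)) := by
    have := mul_nonneg hε.le hU
    positivity
  linarith

section PermChernoff

variable {α : Type*} [Fintype α] [DecidableEq α]

theorem card_perm_filter_lt_avg_le (x : α → ℝ) {s : Finset α} (hs : s.Nonempty) (ε : ℝ)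
    {t : ℝ} (ht : 0 ≤ t) :
    (#{w : Perm α | ε < (∑ i ∈ s, x (w i)) / #s} : ℝ)
      ≤ Fintype.card (Perm α) * ((∑ k, exp (t * (x k - ε))) / Fintype.card α) ^ #s := by
  have hn : (0 : ℝ) < #s := by exact_mod_cast hs.card_pos
  refine (card_filter_lt_le_sum_exp univ _ ε (mul_nonneg ht hn.le)).trans ?_
  refine le_of_eq_of_le (sum_congr rfl fun w _ => ?_)
    (sum_perm_prod_le _ (fun k => (exp_pos _).le) s)
  rw [← exp_sum, ← mul_sum, sum_sub_distrib, sum_const, nsmul_eq_mul]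
  congr 1
  field_simp

theorem card_perm_filter_lt_avg_div_le_exp (x : α → ℝ) (hx : ∑ i, x i = 0) {U ε : ℝ}
    (hxU : ∀ i, x i ≤ U) (hU : 0 ≤ U) (hε : 0 < ε)
    (hD : 0 < 2 * ((∑ i, x i ^ 2) / Fintype.card α) + ε * U) {s : Finset α} (hs : s.Nonempty) :
    (#{w : Perm α | ε < (∑ i ∈ s, x (w i)) / #s} : ℝ) / Fintype.card (Perm α)
      ≤ exp (-(#s * ε ^ 2) / (2 * ((∑ i, x i ^ 2) / Fintype.card α) + ε * U)) := by
  have hN : (0 : ℝ) < Fintype.card α := by exact_mod_cast Fintype.card_pos_iff.2 ⟨hs.choose⟩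
  set σ2 := (∑ i, x i ^ 2) / Fintype.card α
  have hσ : 0 ≤ σ2 := by positivity
  have hA : 0 < σ2 + ε * U := by nlinarith [mul_nonneg hε.le hU]
  set t := ε / (σ2 + ε * U) with ht
  have ht0 : 0 ≤ t := by positivity
  have htU : t * U ≤ 1 := by rw [ht, div_mul_eq_mul_div, div_le_one hA]; linarith
  set q := 1 / 2 + 2 / 9 * (t * U)
  have hmgf : (∑ k, exp (t * x k)) / Fintype.card α ≤ 1 + q * t ^ 2 * σ2 := by
    rw [div_le_iff₀ hN, add_mul, one_mul, mul_div_assoc', div_mul_cancel₀ _ hN.ne']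
    exact sum_exp_mul_le_card_add x hx (mul_nonneg ht0 hU) htU
      fun i => mul_le_mul_of_nonneg_left (hxU i) ht0
  have hmean : (∑ k, exp (t * (x k - ε))) / Fintype.card α ≤ exp (-(ε ^ 2 / (2 * σ2 + ε * U))) :=
    calc (∑ k, exp (t * (x k - ε))) / Fintype.card α
        = exp (-(t * ε)) * ((∑ k, exp (t * x k)) / Fintype.card α) := by
          rw [mul_div_assoc', mul_sum]
          exact congrArg (· / _) (sum_congr rfl fun k _ => by rw [← exp_add]; ring_nf)
      _ ≤ exp (-(t * ε)) * exp (q * t ^ 2 * σ2) := by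
          gcongr
          linarith [add_one_le_exp (q * t ^ 2 * σ2)]
      _ = exp (q * t ^ 2 * σ2 - t * ε) := by rw [← exp_add]; ring_nf
      _ ≤ exp (-(ε ^ 2 / (2 * σ2 + ε * U))) :=
          exp_le_exp.2 (bernstein_exponent_le hσ hU hε hD ht)
  rw [div_le_iff₀ (by exact_mod_cast Fintype.card_pos)]
  calc _ ≤ Fintype.card (Perm α) * ((∑ k, exp (t * (x k - ε))) / Fintype.card α) ^ #s :=
        card_perm_filter_lt_avg_le x hs ε ht0
    _ ≤ Fintype.card (Perm α) * exp (-(ε ^ 2 / (2 * σ2 + ε * U))) ^ #s := by gcongr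
    _ = _ := by rw [← exp_nat_mul, mul_comm]; ring_nf

theorem card_perm_filter_lt_abs_avg_div_le_exp (x : α → ℝ) (hx : ∑ i, x i = 0) {U ε : ℝ}
    (hxU : ∀ i, |x i| ≤ U) (hε : 0 < ε) {s : Finset α} (hs : s.Nonempty) :
    (#{w : Perm α | ε < |(∑ i ∈ s, x (w i)) / #s|} : ℝ) / Fintype.card (Perm α)
      ≤ 2 * exp (-(#s * ε ^ 2) / (2 * ((∑ i, x i ^ 2) / Fintype.card α) + ε * U)) := by
  have hcard : (0 : ℝ) < Fintype.card (Perm α) := by exact_mod_cast Fintype.card_pos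
  rcases le_or_gt (2 * ((∑ i, x i ^ 2) / Fintype.card α) + ε * U) 0 with hD | hD
  · have hprob :
        (#{w : Perm α | ε < |(∑ i ∈ s, x (w i)) / #s|} : ℝ) / Fintype.card (Perm α) ≤ 1 :=
      div_le_one_of_le₀ (by exact_mod_cast card_le_univ _) hcard.le
    have : 1 ≤ exp (-(#s * ε ^ 2) / (2 * ((∑ i, x i ^ 2) / Fintype.card α) + ε * U)) :=
      one_le_exp (div_nonneg_of_nonpos (neg_nonpos.2 (by positivity)) hD)
    linarith
  have hU : 0 ≤ U := (abs_nonneg _).trans (hxU hs.choose)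
  have hupper := card_perm_filter_lt_avg_div_le_exp x hx (fun i => (le_abs_self _).trans (hxU i))
    hU hε hD hs
  have hlower := card_perm_filter_lt_avg_div_le_exp (fun i => -x i) (by simp [hx])
    (fun i => (neg_le_abs _).trans (hxU i)) hU hε (by simpa using hD) hs
  simp only [neg_sq] at hlower
  have hsplit : (#{w : Perm α | ε < |(∑ i ∈ s, x (w i)) / #s|} : ℝ)
      ≤ #{w : Perm α | ε < (∑ i ∈ s, x (w i)) / #s}
        + #{w : Perm α | ε < (∑ i ∈ s, -x (w i)) / #s} := by
    refine mod_cast (card_le_card fun w => ?_).trans (card_union_le _ _)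
    simp [lt_abs, sum_neg_distrib, neg_div]
  calc _ ≤ ((#{w : Perm α | ε < (∑ i ∈ s, x (w i)) / #s} : ℝ)
          + #{w : Perm α | ε < (∑ i ∈ s, -x (w i)) / #s}) / Fintype.card (Perm α) := by gcongr
    _ ≤ _ := by rw [add_div]; linarith

end PermChernoff

section Centering

variable {ι : Type*} (s : Finset ι) (ξ : ι → ℝ)

theorem sum_sub_mean_eq_zero : ∑ i ∈ s, (ξ i - (∑ j ∈ s, ξ j) / #s) = 0 := by
  rcases s.eq_empty_or_nonempty with rfl | hs
  · simp
  have hn : (#s : ℝ) ≠ 0 := by exact_mod_cast hs.card_pos.ne'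
  rw [sum_sub_distrib, sum_const, nsmul_eq_mul, mul_div_cancel₀ _ hn, sub_self]

theorem sum_sub_mean_sq_div_card :
    (∑ i ∈ s, (ξ i - (∑ j ∈ s, ξ j) / #s) ^ 2) / #s
      = 1 / #s * ∑ i ∈ s, ξ i ^ 2 - (1 / #s * ∑ i ∈ s, ξ i) ^ 2 := by
  rcases s.eq_empty_or_nonempty with rfl | hs
  · simp
  have hn : (#s : ℝ) ≠ 0 := by exact_mod_cast hs.card_pos.ne'
  simp only [sub_sq, sum_add_distrib, sum_sub_distrib, ← sum_mul, ← mul_sum, sum_const,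
    nsmul_eq_mul]
  field_simp
  ring

theorem abs_sub_mean_le_sup'_sub_inf' (hs : s.Nonempty) {i : ι} (hi : i ∈ s) :
    |ξ i - (∑ j ∈ s, ξ j) / #s| ≤ s.sup' hs ξ - s.inf' hs ξ := by
  have hn : (0 : ℝ) < #s := by exact_mod_cast hs.card_pos
  have hmean_le : (∑ j ∈ s, ξ j) / #s ≤ s.sup' hs ξ := by
    rw [div_le_iff₀ hn, mul_comm, ← nsmul_eq_mul]
    exact sum_le_card_nsmul _ _ _ fun j hj => le_sup' ξ hj
  have hle_mean : s.inf' hs ξ ≤ (∑ j ∈ s, ξ j) / #s := by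
    rw [le_div_iff₀ hn, mul_comm, ← nsmul_eq_mul]
    exact card_nsmul_le_sum _ _ _ fun j hj => inf'_le ξ hj
  rw [abs_le]
  constructor <;> linarith [le_sup' ξ hi, inf'_le ξ hi]

end Centering

theorem bernstein_without_replacement_general (N n : ℕ) (hn : 1 ≤ n) (hnN : n ≤ N)
    (ξ : Fin N → ℝ) (ε : ℝ) (hε : 0 < ε)
    (hne : (Finset.univ : Finset (Fin N)).Nonempty)
    (SN σsq UN : ℝ)
    (hSN : SN = ∑ i, ξ i)
    (hσ : σsq = (1 / N) * (∑ i, ξ i ^ 2) - ((1 / N) * ∑ i, ξ i) ^ 2)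
    (hU : UN = Finset.univ.sup' hne ξ - Finset.univ.inf' hne ξ) :
    ((Finset.univ.filter (fun w : Equiv.Perm (Fin N) =>
        |(∑ i ∈ Finset.univ.filter (fun i : Fin N => (i : ℕ) < n), ξ (w i)) / n
          - SN / N| > ε)).card : ℝ)
      / (Fintype.card (Equiv.Perm (Fin N)))
    ≤ 2 * Real.exp (-(n * ε ^ 2) / (2 * σsq + ε * UN)) := by
  set s : Finset (Fin N) := univ.filter (fun i : Fin N => (i : ℕ) < n)
  have hs : #s = n := by simpa [s, Fin.card_filter_val_lt] using hnN
  set x : Fin N → ℝ := fun i => ξ i - SN / N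
  have hx : ∑ i, x i = 0 := by simpa [x, hSN] using sum_sub_mean_eq_zero univ ξ
  have hxU : ∀ i, |x i| ≤ UN := fun i => by
    simpa [x, hSN, hU] using abs_sub_mean_le_sup'_sub_inf' univ ξ hne (mem_univ i)
  have hσx : σsq = (∑ i, x i ^ 2) / N := by
    simpa [x, hSN, hσ] using (sum_sub_mean_sq_div_card univ ξ).symm
  have hdev : ∀ w : Perm (Fin N),
      (∑ i ∈ s, ξ (w i)) / n - SN / N = (∑ i ∈ s, x (w i)) / #s := by
    intro w
    rw [sum_sub_distrib, sum_const, hs, nsmul_eq_mul]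
    field_simp
  have key := card_perm_filter_lt_abs_avg_div_le_exp x hx hxU hε (card_pos.1 (hs ▸ hn))
  simp only [Fintype.card_fin, hs, ← hσx] at key
  simpa only [gt_iff_lt, hdev, hs] using key

/-- Bernstein inequality for sampling without replacement: for a uniformly random
permutation `w` of `[N]`, the mean of the first `n` entries `ξ_{w(i)}` concentrates
around the full mean, with deviation probability at most
`2 exp(−nε²/(2σ_N² + ε U_N))`. -/
theorem bernstein_without_replacement (N n : ℕ) (hN : 1 ≤ N) (hn : 1 ≤ n) (hnN : n ≤ N)
    (ξ : Fin N → ℝ) (ε : ℝ) (hε : 0 < ε)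
    (hne : (Finset.univ : Finset (Fin N)).Nonempty)
    (SN σsq UN : ℝ)
    (hSN : SN = ∑ i, ξ i)
    (hσ : σsq = (1 / N) * (∑ i, ξ i ^ 2) - ((1 / N) * ∑ i, ξ i) ^ 2)
    (hU : UN = Finset.univ.sup' hne ξ - Finset.univ.inf' hne ξ) :
    ((Finset.univ.filter (fun w : Equiv.Perm (Fin N) =>
        |(∑ i ∈ Finset.univ.filter (fun i : Fin N => (i : ℕ) < n), ξ (w i)) / n
          - SN / N| > ε)).card : ℝ)
      / (Fintype.card (Equiv.Perm (Fin N)))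
    ≤ 2 * Real.exp (-(n * ε ^ 2) / (2 * σsq + ε * UN)) :=
  bernstein_without_replacement_general N n hn hnN ξ ε hε hne SN σsq UN hSN hσ hU
end

section
/- Let V be a closed bounded subset of ℝ^d contained in an ellipsoid B = {v : ‖Mv‖ ≤ 1}, and suppose there exists v ∈ V with |pᵀv| ≥ κ for some vector p. Let B₊ be the minimum-volume covering ellipsoid of {v ∈ B : |pᵀv| ≤ γ}. If γ/κ ≤ 1/√d, then vol(B₊)/vol(B) ≤ √d · (γ/κ) · (d/(d−1))^{(d−1)/2} · (1 − γ²/κ²)^{(d−1)/2}; in particular, when γ/κ = 1/(3√d), vol(B₊)/vol(B) ≤ 3/5. -/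
open MeasureTheory

/-- A (nondegenerate) ellipsoid in `ℝ^d`: the preimage of the unit ball under an
invertible linear map, translated to an arbitrary center. -/
def IsEllipsoid {d : ℕ} (E : Set (EuclideanSpace ℝ (Fin d))) : Prop :=
  ∃ (c : EuclideanSpace ℝ (Fin d))
    (L : EuclideanSpace ℝ (Fin d) ≃ₗ[ℝ] EuclideanSpace ℝ (Fin d)),
    E = {x | ‖L (x - c)‖ ≤ 1}

/-!
After the change of variables `w = M v` the ellipsoid `B` becomes the unit ball, and the witness
`v ∈ V ⊆ B` forces `‖M⁻ᵀ p‖ ≥ κ`, so the slab `|pᵀv| ≤ γ` is mapped into a slab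
`|⟪u, w⟫| ≤ β` with `‖u‖ = 1` and `β = γ/κ`. When `d β² ≤ 1` this slice of the unit ball lies in
the spheroid with semi-axis `a = √d β` along `u` and `b = √(d (1 - β²) / (d - 1))` across it,
whose volume is `a b^(d-1)` times that of the ball, and `B₊` is no larger. For `β = 1/(3√d)` the
factor equals `(1 + 8/(9(d-1)))^((d-1)/2) / 3 ≤ e^(4/9) / 3 ≤ 3/5`.
-/

open Module
open scoped RealInnerProductSpace

namespace EuclideanSpace

variable {ι : Type*}

noncomputable def diagEquiv (c : ι → ℝ) (hc : ∀ i, c i ≠ 0) :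
    EuclideanSpace ℝ ι ≃ₗ[ℝ] EuclideanSpace ℝ ι where
  toFun x := WithLp.toLp 2 fun i => c i * x i
  invFun x := WithLp.toLp 2 fun i => (c i)⁻¹ * x i
  map_add' x y := by ext i; simp [mul_add]
  map_smul' r x := by ext i; simp [mul_left_comm]
  left_inv x := by ext i; simp [hc i]
  right_inv x := by ext i; simp [hc i]

@[simp]
theorem diagEquiv_apply (c : ι → ℝ) (hc : ∀ i, c i ≠ 0) (x : EuclideanSpace ℝ ι) (i : ι) :
    diagEquiv c hc x i = c i * x i := rfl

@[simp]
theorem diagEquiv_symm_apply (c : ι → ℝ) (hc : ∀ i, c i ≠ 0) (x : EuclideanSpace ℝ ι) (i : ι) :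
    (diagEquiv c hc).symm x i = (c i)⁻¹ * x i := rfl

theorem det_diagEquiv [Fintype ι] [DecidableEq ι] (c : ι → ℝ) (hc : ∀ i, c i ≠ 0) :
    LinearMap.det (diagEquiv c hc : EuclideanSpace ℝ ι →ₗ[ℝ] EuclideanSpace ℝ ι) = ∏ i, c i := by
  let b := (EuclideanSpace.basisFun ι ℝ).toBasis
  have : LinearMap.toMatrix b b (diagEquiv c hc : EuclideanSpace ℝ ι →ₗ[ℝ] _) =
      Matrix.diagonal c := by
    ext i j
    simp [b, LinearMap.toMatrix_apply, Matrix.diagonal_apply]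
  rw [← LinearMap.det_toMatrix b, this, Matrix.det_diagonal]

end EuclideanSpace

theorem Real.sqrt_pow_eq_rpow {x : ℝ} (hx : 0 ≤ x) (n : ℕ) : √x ^ n = x ^ ((n : ℝ) / 2) := by
  rw [Real.sqrt_eq_rpow, ← Real.rpow_mul_natCast hx]
  ring_nf

theorem spheroid_form_le_one {d β t s : ℝ} (hd : 1 < d) (hβ : 0 < β) (hdβ : d * β ^ 2 ≤ 1)
    (ht : t ≤ β ^ 2) (hs : s ≤ 1) :
    t / (d * β ^ 2) + (s - t) / (d / (d - 1) * (1 - β ^ 2)) ≤ 1 := by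
  have hd₁ : 0 < d - 1 := sub_pos.2 hd
  have hβ₁ : 0 < 1 - β ^ 2 := by nlinarith
  rw [div_add_div _ _ (by positivity) (by positivity), div_le_one (by positivity)]
  field_simp
  -- the form is affine in `t` with slope proportional to `1 - d β²` and increasing in `s`,
  -- and it equals `1` at `t = β²`, `s = 1`
  nlinarith [mul_nonneg (sub_nonneg.2 ht) (sub_nonneg.2 hdβ),
    mul_nonneg (mul_nonneg (sub_nonneg.2 hs) (sq_nonneg β)) hd₁.le]

noncomputable def ellipsoidShrinkFactor (d : ℕ) (β : ℝ) : ℝ :=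
  Real.sqrt d * β * ((d / (d - 1) : ℝ)) ^ (((d : ℝ) - 1) / 2) * (1 - β ^ 2) ^ (((d : ℝ) - 1) / 2)

theorem ellipsoidShrinkFactor_le {d : ℕ} (hd : 2 ≤ d) :
    ellipsoidShrinkFactor d (1 / (3 * √d)) ≤ 3 / 5 := by
  have hd₀ : (0 : ℝ) < d := by positivity
  have hd₂ : (2 : ℝ) ≤ d := by exact_mod_cast hd
  have hd₁ : 0 < (d : ℝ) - 1 := by linarith
  set r : ℝ := ((d : ℝ) - 1) / 2
  set x : ℝ := 8 / (9 * ((d : ℝ) - 1))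
  have hβ : (1 / (3 * √d)) ^ 2 = 1 / (9 * d) := by
    rw [div_pow, mul_pow, Real.sq_sqrt hd₀.le]; norm_num
  have hbase : (d / (d - 1) : ℝ) ^ r * (1 - (1 / (3 * √d)) ^ 2) ^ r = (1 + x) ^ r := by
    rw [← Real.mul_rpow (by positivity)
      (by rw [hβ, sub_nonneg, div_le_one (by positivity)]; linarith), hβ]
    congr 1
    simp only [x]
    field_simp
    ring
  have hexp : (1 + x) ^ r ≤ 9 / 5 := calc
    (1 + x) ^ r ≤ Real.exp x ^ r := by gcongr; linarith [Real.add_one_le_exp x]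
    _ = Real.exp (4 / 9) := by rw [← Real.exp_mul]; congr 1; simp only [x, r]; field_simp; ring
    _ ≤ 1 / (1 - 4 / 9) := Real.exp_bound_div_one_sub_of_interval (by norm_num) (by norm_num)
    _ = 9 / 5 := by norm_num
  calc ellipsoidShrinkFactor d (1 / (3 * √d))
      = √d * (1 / (3 * √d)) * ((d / (d - 1) : ℝ) ^ r * (1 - (1 / (3 * √d)) ^ 2) ^ r) := by
        rw [ellipsoidShrinkFactor]; ring
    _ = 1 / 3 * (1 + x) ^ r := by rw [hbase]; field_simp
    _ ≤ 1 / 3 * (9 / 5) := by gcongr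
    _ = 3 / 5 := by norm_num

section InnerProductSpace

variable {E : Type*} [NormedAddCommGroup E] [InnerProductSpace ℝ E] [FiniteDimensional ℝ E]

theorem exists_linearEquiv_norm_sq_eq_spheroid {u : E} (hu : ‖u‖ = 1) {a b : ℝ} (ha : a ≠ 0)
    (hb : b ≠ 0) : ∃ K : E ≃ₗ[ℝ] E,
      (∀ w, ‖K w‖ ^ 2 = ⟪u, w⟫ ^ 2 / a ^ 2 + (‖w‖ ^ 2 - ⟪u, w⟫ ^ 2) / b ^ 2) ∧
      LinearMap.det (K.symm : E →ₗ[ℝ] E) = a * b ^ (finrank ℝ E - 1) := by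
  classical
  set n := finrank ℝ E
  have hn : 0 < n := finrank_pos_iff_exists_ne_zero.2 ⟨u, norm_ne_zero_iff.1 (by simp [hu])⟩
  let j₀ : Fin n := ⟨0, hn⟩
  have hu₁ : Orthonormal ℝ (({j₀} : Set (Fin n)).domRestrict fun _ => u) :=
    orthonormal_subsingleton_iff.2 fun _ => hu
  obtain ⟨e, he⟩ := hu₁.exists_orthonormalBasis_extension_of_card_eq (by simp [n])
  have heu : e j₀ = u := he j₀ rfl
  let c : Fin n → ℝ := fun i => if i = j₀ then a else b
  have hc : ∀ i, c i ≠ 0 := fun i => by by_cases h : i = j₀ <;> simp [c, h, ha, hb]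
  let D := EuclideanSpace.diagEquiv c hc
  refine ⟨(e.repr.toLinearEquiv.trans D |>.trans e.repr.toLinearEquiv.symm).symm, fun w => ?_, ?_⟩
  · set x := e.repr w
    have hx : x j₀ = ⟪u, w⟫ := by rw [← heu]; exact e.repr_apply_apply w j₀
    have hcompl : ∑ i ∈ {j₀}ᶜ, x i ^ 2 = ‖w‖ ^ 2 - ⟪u, w⟫ ^ 2 := by
      rw [← e.repr.norm_map w, EuclideanSpace.real_norm_sq_eq, Fintype.sum_eq_add_sum_compl j₀, hx]
      ring
    have hoff : ∑ i ∈ {j₀}ᶜ, (D.symm x i) ^ 2 = (‖w‖ ^ 2 - ⟪u, w⟫ ^ 2) / b ^ 2 := by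
      rw [← hcompl, Finset.sum_div]
      refine Finset.sum_congr rfl fun i hi => ?_
      have hij : i ≠ j₀ := by simpa using hi
      simp [D, c, hij, div_eq_inv_mul, mul_pow]
    change ‖e.repr.symm (D.symm x)‖ ^ 2 = _
    rw [LinearIsometryEquiv.norm_map, EuclideanSpace.real_norm_sq_eq,
      Fintype.sum_eq_add_sum_compl j₀, hoff]
    simp [D, c, hx, div_eq_inv_mul, mul_pow]
  · have hoff : ∏ i ∈ {j₀}ᶜ, c i = b ^ (n - 1) := by
      rw [Finset.prod_congr rfl fun i hi => if_neg (by simpa using hi), Finset.prod_const,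
        Finset.card_compl, Finset.card_singleton, Fintype.card_fin]
    rw [LinearEquiv.symm_symm]
    calc LinearMap.det _ = LinearMap.det (D : EuclideanSpace ℝ (Fin n) →ₗ[ℝ] _) :=
          LinearMap.det_conj _ e.repr.symm.toLinearEquiv
      _ = a * b ^ (n - 1) := by
        rw [EuclideanSpace.det_diagEquiv, Fintype.prod_eq_mul_prod_compl j₀, hoff]
        simp [c]
theorem exists_linearEquiv_ball_inter_slab_subset {u : E} (hu : ‖u‖ = 1) {β : ℝ} (hβ : 0 < β)
    (hd : 2 ≤ finrank ℝ E) (hdβ : finrank ℝ E * β ^ 2 ≤ 1) : ∃ K : E ≃ₗ[ℝ] E,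
      (∀ w, ‖w‖ ≤ 1 → |⟪u, w⟫| ≤ β → ‖K w‖ ≤ 1) ∧
      |LinearMap.det (K.symm : E →ₗ[ℝ] E)| = ellipsoidShrinkFactor (finrank ℝ E) β := by
  set d := finrank ℝ E
  have hd₁ : (1 : ℝ) < d := by exact_mod_cast hd
  have hβ₁ : 0 < 1 - β ^ 2 := by nlinarith
  have hd' : 0 < (d / (d - 1) : ℝ) := div_pos (by positivity) (by linarith)
  set a := √d * β
  set b := √(d / (d - 1) : ℝ) * √(1 - β ^ 2)
  have ha : a ^ 2 = d * β ^ 2 := by rw [mul_pow, Real.sq_sqrt (by positivity)]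
  have hb : b ^ 2 = d / (d - 1) * (1 - β ^ 2) := by
    rw [mul_pow, Real.sq_sqrt hd'.le, Real.sq_sqrt hβ₁.le]
  have hb₀ : 0 < b := mul_pos (Real.sqrt_pos.2 hd') (Real.sqrt_pos.2 hβ₁)
  obtain ⟨K, hK, hdet⟩ := exists_linearEquiv_norm_sq_eq_spheroid hu (a := a) (b := b)
    (by positivity) hb₀.ne'
  refine ⟨K, fun w hw huw => ?_, ?_⟩
  · rw [← sq_le_one_iff₀ (norm_nonneg _), hK, ha, hb]
    exact spheroid_form_le_one hd₁ hβ hdβ (sq_le_sq' (abs_le.1 huw).1 (abs_le.1 huw).2)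
      (pow_le_one₀ (norm_nonneg w) hw)
  · have hcast : ((d - 1 : ℕ) : ℝ) = d - 1 := by rw [Nat.cast_sub (by omega)]; simp
    rw [hdet, abs_of_pos (by positivity), mul_pow, Real.sqrt_pow_eq_rpow hd'.le,
      Real.sqrt_pow_eq_rpow hβ₁.le, hcast, ellipsoidShrinkFactor]
    ring

theorem volume_preimage_trans_linearEquiv [MeasurableSpace E] [BorelSpace E] (μ : Measure E)
    [μ.IsAddHaarMeasure] (M K : E ≃ₗ[ℝ] E) (s : Set E) :
    μ ((M.trans K) ⁻¹' s) = ENNReal.ofReal |LinearMap.det (K.symm : E →ₗ[ℝ] E)| * μ (M ⁻¹' s) := by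
  change μ (M ⁻¹' (K ⁻¹' s)) = _
  simp only [Measure.addHaar_preimage_linearEquiv, mul_left_comm]

theorem exists_norm_eq_one_abs_inner_le (M : E ≃ₗ[ℝ] E) (p : E) {κ : ℝ} (hκ : 0 < κ) {v₀ : E}
    (hv₀ : ‖M v₀‖ ≤ 1) (hpv₀ : κ ≤ |⟪p, v₀⟫|) :
    ∃ u : E, ‖u‖ = 1 ∧ ∀ v, |⟪u, M v⟫| ≤ |⟪p, v⟫| / κ := by
  set q := LinearMap.adjoint (M.symm : E →ₗ[ℝ] E) p
  have hq : ∀ v, ⟪q, M v⟫ = ⟪p, v⟫ := fun v => by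
    rw [LinearMap.adjoint_inner_left]; simp
  have hκq : κ ≤ ‖q‖ := calc
    κ ≤ |⟪q, M v₀⟫| := by rwa [hq]
    _ ≤ ‖q‖ * ‖M v₀‖ := abs_real_inner_le_norm _ _
    _ ≤ ‖q‖ := mul_le_of_le_one_right (norm_nonneg q) hv₀
  have hq₀ : q ≠ 0 := norm_pos_iff.1 (hκ.trans_le hκq)
  refine ⟨‖q‖⁻¹ • q, norm_smul_inv_norm hq₀, fun v => ?_⟩
  rw [real_inner_smul_left, hq, abs_mul, abs_inv, abs_norm, inv_mul_eq_div]
  exact div_le_div_of_nonneg_left (abs_nonneg _) hκ hκq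

end InnerProductSpace

theorem ellipsoid_shrinkage_general (d : ℕ) (hd : 2 ≤ d)
    (M : EuclideanSpace ℝ (Fin d) ≃ₗ[ℝ] EuclideanSpace ℝ (Fin d))
    (B : Set (EuclideanSpace ℝ (Fin d))) (hB : B = {v | ‖M v‖ ≤ 1})
    (V : Set (EuclideanSpace ℝ (Fin d))) (hVB : V ⊆ B)
    (p : EuclideanSpace ℝ (Fin d)) (κ γ : ℝ) (hκ : 0 < κ) (hγ : 0 < γ)
    (hwitness : ∃ v ∈ V, κ ≤ |(inner ℝ p v : ℝ)|)
    (Bp : Set (EuclideanSpace ℝ (Fin d)))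
    (hBpMin : ∀ E : Set (EuclideanSpace ℝ (Fin d)), IsEllipsoid E →
      {v ∈ B | |(inner ℝ p v : ℝ)| ≤ γ} ⊆ E → volume Bp ≤ volume E)
    (hratio : γ / κ ≤ 1 / Real.sqrt d) :
    volume Bp ≤
      ENNReal.ofReal (Real.sqrt d * (γ / κ)
          * ((d / (d - 1) : ℝ)) ^ (((d : ℝ) - 1) / 2)
          * (1 - γ ^ 2 / κ ^ 2) ^ (((d : ℝ) - 1) / 2)) * volume B
    ∧ (γ / κ = 1 / (3 * Real.sqrt d) →
        volume Bp ≤ ENNReal.ofReal (3 / 5) * volume B) := by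
  obtain ⟨v₀, hv₀V, hpv₀⟩ := hwitness
  obtain ⟨u, hu, hMu⟩ := exists_norm_eq_one_abs_inner_le M p hκ (by simpa [hB] using hVB hv₀V) hpv₀
  have hβ : 0 < γ / κ := div_pos hγ hκ
  have hdβ : (d : ℝ) * (γ / κ) ^ 2 ≤ 1 := calc
    (d : ℝ) * (γ / κ) ^ 2 ≤ d * (1 / √d) ^ 2 := by gcongr
    _ = 1 := by rw [div_pow, Real.sq_sqrt (Nat.cast_nonneg d)]; field_simp
  have hfin : finrank ℝ (EuclideanSpace ℝ (Fin d)) = d := finrank_euclideanSpace_fin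
  obtain ⟨K, hK, hdet⟩ :=
    exists_linearEquiv_ball_inter_slab_subset hu hβ (by rwa [hfin]) (by rwa [hfin])
  rw [hfin] at hdet
  have hvol : volume Bp ≤ ENNReal.ofReal (ellipsoidShrinkFactor d (γ / κ)) * volume B := calc
    volume Bp ≤ volume ((M.trans K) ⁻¹' Metric.closedBall 0 1) := by
      refine hBpMin _ ⟨0, M.trans K, by ext; simp⟩ fun v ⟨hvB, hpv⟩ => ?_
      rw [hB] at hvB
      simpa using hK (M v) hvB ((hMu v).trans (div_le_div_of_nonneg_right hpv hκ.le))
    _ = ENNReal.ofReal (ellipsoidShrinkFactor d (γ / κ)) * volume B := by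
      rw [volume_preimage_trans_linearEquiv, hdet, hB]
      congr 2
      ext
      simp
  refine ⟨by rwa [← div_pow], fun hval => hvol.trans ?_⟩
  rw [hval]
  gcongr
  exact ellipsoidShrinkFactor_le hd

/-- Ellipsoid shrinkage (Todd / Jiang et al.): slicing an ellipsoid `B` by
`{|pᵀv| ≤ γ}`, when some `v ∈ V ⊆ B` satisfies `|pᵀv| ≥ κ` and `γ/κ ≤ 1/√d`, the
minimum covering ellipsoid `B₊` of the slice satisfies
`vol(B₊)/vol(B) ≤ √d (γ/κ) (d/(d−1))^{(d−1)/2} (1 − γ²/κ²)^{(d−1)/2}`;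
in particular, `vol(B₊) ≤ (3/5) vol(B)` when `γ/κ = 1/(3√d)`. -/
theorem ellipsoid_shrinkage (d : ℕ) (hd : 2 ≤ d)
    (M : EuclideanSpace ℝ (Fin d) ≃ₗ[ℝ] EuclideanSpace ℝ (Fin d))
    (B : Set (EuclideanSpace ℝ (Fin d))) (hB : B = {v | ‖M v‖ ≤ 1})
    (V : Set (EuclideanSpace ℝ (Fin d))) (hVB : V ⊆ B)
    (hVclosed : IsClosed V) (hVbdd : Bornology.IsBounded V)
    (p : EuclideanSpace ℝ (Fin d)) (κ γ : ℝ) (hκ : 0 < κ) (hγ : 0 < γ)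
    (hwitness : ∃ v ∈ V, κ ≤ |(inner ℝ p v : ℝ)|)
    (Bp : Set (EuclideanSpace ℝ (Fin d)))
    (hBpEll : IsEllipsoid Bp)
    (hBpCover : {v ∈ B | |(inner ℝ p v : ℝ)| ≤ γ} ⊆ Bp)
    (hBpMin : ∀ E : Set (EuclideanSpace ℝ (Fin d)), IsEllipsoid E →
      {v ∈ B | |(inner ℝ p v : ℝ)| ≤ γ} ⊆ E → volume Bp ≤ volume E)
    (hratio : γ / κ ≤ 1 / Real.sqrt d) :
    volume Bp ≤
      ENNReal.ofReal (Real.sqrt d * (γ / κ)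
          * ((d / (d - 1) : ℝ)) ^ (((d : ℝ) - 1) / 2)
          * (1 - γ ^ 2 / κ ^ 2) ^ (((d : ℝ) - 1) / 2)) * volume B
    ∧ (γ / κ = 1 / (3 * Real.sqrt d) →
        volume Bp ≤ ENNReal.ofReal (3 / 5) * volume B) :=
  ellipsoid_shrinkage_general d hd M B hB V hVB p κ γ hκ hγ hwitness Bp hBpMin hratio
end

section
/- For a finite action set of size A, a finite hypothesis set G with induced deterministic policies {π_f}, a state distribution D, and smoothing parameter μ ∈ (0, 1/(2A)], there exists a probability distribution P over G such that for all f ∈ G, E_{x∼D}[ 1 / ((1 − Aμ) W_P(x, π_f(x)) + μ) ] ≤ 2A, where W_P(x, a) = Σ_{g∈G} 1[π_g(x) = a] P(g). -/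
/-!
Instead of a minimax argument, take `P` maximizing the log-barrier
`Σ_x D(x) Σ_a log c_P(x, a)` over the simplex, where `c_Q(x, a) = ν W_Q(x, a) + μ` and
`ν = 1 − Aμ`. Optimality of `P` against the direction of the point mass `δ_f` gives
`Σ_x D(x) Σ_a c_{δ_f}(x, a) / c_P(x, a) ≤ A`. Keeping only the term `a = π_f(x)`, where
`c_{δ_f} ≥ ν ≥ 1/2`, yields `Σ_x D(x) / c_P(x, π_f(x)) ≤ A / ν ≤ 2A`.
-/

open Finset Set

theorem IsMaxOn.hasDerivAt_segment_nonpos {E : Type*} [AddCommGroup E] [Module ℝ E]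
    {F : E → ℝ} {s : Set E} {p q : E} {F' : ℝ} (hs : Convex ℝ s) (hmax : IsMaxOn F s p)
    (hp : p ∈ s) (hq : q ∈ s) (hF : HasDerivAt (fun t : ℝ => F (p + t • (q - p))) F' 0) :
    F' ≤ 0 := by
  have hmax' : IsLocalMaxOn (fun t : ℝ => F (p + t • (q - p))) (Icc 0 1) 0 :=
    IsMaxOn.localize fun t ht => by simpa using hmax (hs.add_smul_sub_mem hp hq ht)
  simpa using hmax'.hasFDerivWithinAt_nonpos hF.hasFDerivAt.hasFDerivWithinAt
    (y := 1) (mem_posTangentConeAt_of_segment_subset (by simp [segment_eq_Icc]))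

section LogBarrier

variable {X 𝒜 G : Type*} [DecidableEq 𝒜] [Fintype G]

def actionWeight (π : G → X → 𝒜) (P : G → ℝ) (x : X) (a : 𝒜) : ℝ :=
  ∑ g, if π g x = a then P g else 0

def smoothedWeight (ν μ : ℝ) (π : G → X → 𝒜) (P : G → ℝ) (x : X) (a : 𝒜) : ℝ :=
  ν * actionWeight π P x a + μ

variable {π : G → X → 𝒜} {P Q : G → ℝ} {ν μ : ℝ}

lemma actionWeight_add_smul_sub (t : ℝ) (x : X) (a : 𝒜) :
    actionWeight π (P + t • (Q - P)) x a =
      actionWeight π P x a + t * (actionWeight π Q x a - actionWeight π P x a) := by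
  simp only [actionWeight, ← sum_filter, Pi.add_apply, Pi.smul_apply, Pi.sub_apply,
    smul_eq_mul, sum_add_distrib, ← mul_sum, sum_sub_distrib]

lemma actionWeight_single_self [DecidableEq G] (f : G) (x : X) :
    actionWeight π (Pi.single f 1) x (π f x) = 1 := by
  rw [actionWeight, Fintype.sum_eq_single f] <;> simp +contextual

lemma actionWeight_nonneg (hP : ∀ g, 0 ≤ P g) (x : X) (a : 𝒜) :
    0 ≤ actionWeight π P x a :=
  sum_nonneg fun g _ => by split_ifs <;> simp [hP g]

lemma continuous_actionWeight (x : X) (a : 𝒜) :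
    Continuous fun P => actionWeight π P x a := by
  simp only [actionWeight, ← sum_filter]
  fun_prop

lemma smoothedWeight_pos (hν : 0 ≤ ν) (hμ : 0 < μ) (hP : ∀ g, 0 ≤ P g) (x : X) (a : 𝒜) :
    0 < smoothedWeight ν μ π P x a :=
  add_pos_of_nonneg_of_pos (mul_nonneg hν (actionWeight_nonneg hP x a)) hμ

lemma smoothedWeight_add_smul_sub (t : ℝ) (x : X) (a : 𝒜) :
    smoothedWeight ν μ π (P + t • (Q - P)) x a = smoothedWeight ν μ π P x a +
      t * (smoothedWeight ν μ π Q x a - smoothedWeight ν μ π P x a) := by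
  simp only [smoothedWeight, actionWeight_add_smul_sub]
  ring

variable [Fintype X] [Fintype 𝒜]

noncomputable def logBarrier (D : X → ℝ) (ν μ : ℝ) (π : G → X → 𝒜) (P : G → ℝ) : ℝ :=
  ∑ x, D x * ∑ a, Real.log (smoothedWeight ν μ π P x a)

lemma continuousOn_logBarrier (D : X → ℝ) (hν : 0 ≤ ν) (hμ : 0 < μ) :
    ContinuousOn (logBarrier D ν μ π) (stdSimplex ℝ G) := by
  have hc : ∀ x a, Continuous fun P => smoothedWeight ν μ π P x a := fun x a =>
    ((continuous_actionWeight x a).const_mul ν).add_const μ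
  unfold logBarrier
  fun_prop (disch := exact fun P hP =>
    (smoothedWeight_pos hν hμ hP.1 _ _).ne')

lemma exists_isMaxOn_logBarrier [Nonempty G] (D : X → ℝ) (hν : 0 ≤ ν) (hμ : 0 < μ) :
    ∃ P ∈ stdSimplex ℝ G, IsMaxOn (logBarrier D ν μ π) (stdSimplex ℝ G) P := by
  classical
  exact (isCompact_stdSimplex ℝ G).exists_isMaxOn
    ⟨_, single_mem_stdSimplex ℝ (Classical.arbitrary G)⟩ (continuousOn_logBarrier D hν hμ)

lemma hasDerivAt_logBarrier_add_smul_sub (D : X → ℝ)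
    (hP : ∀ x a, smoothedWeight ν μ π P x a ≠ 0) :
    HasDerivAt (fun t : ℝ => logBarrier D ν μ π (P + t • (Q - P)))
      (∑ x, D x * ∑ a, (smoothedWeight ν μ π Q x a - smoothedWeight ν μ π P x a) /
        smoothedWeight ν μ π P x a) 0 := by
  unfold logBarrier
  simp only [smoothedWeight_add_smul_sub]
  refine HasDerivAt.fun_sum fun x _ => (HasDerivAt.fun_sum fun a _ => ?_).const_mul (D x)
  simpa using (((hasDerivAt_id (0 : ℝ)).mul_const _).const_add _).log (by simpa using hP x a)

lemma sum_smoothedWeight_div_le_card (hν : 0 ≤ ν) (hμ : 0 < μ) {D : X → ℝ}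
    (hD1 : ∑ x, D x = 1) (hP : P ∈ stdSimplex ℝ G)
    (hmax : IsMaxOn (logBarrier D ν μ π) (stdSimplex ℝ G) P) (hQ : Q ∈ stdSimplex ℝ G) :
    ∑ x, D x * ∑ a, smoothedWeight ν μ π Q x a / smoothedWeight ν μ π P x a ≤
      Fintype.card 𝒜 := by
  have hpos := smoothedWeight_pos (π := π) hν hμ hP.1
  have hfirst := hmax.hasDerivAt_segment_nonpos (convex_stdSimplex ℝ G) hP hQ
    (hasDerivAt_logBarrier_add_smul_sub D fun x a => (hpos x a).ne')
  have hsplit : ∀ x, ∑ a, (smoothedWeight ν μ π Q x a - smoothedWeight ν μ π P x a) /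
      smoothedWeight ν μ π P x a =
      ∑ a, smoothedWeight ν μ π Q x a / smoothedWeight ν μ π P x a - Fintype.card 𝒜 := by
    intro x
    simp [sub_div, div_self (hpos x _).ne', sum_sub_distrib]
  simp only [hsplit, mul_sub, sum_sub_distrib, ← sum_mul, hD1, one_mul] at hfirst
  linarith

lemma mul_sum_inv_smoothedWeight_le_card (hν : 0 ≤ ν) (hμ : 0 < μ) {D : X → ℝ}
    (hD0 : ∀ x, 0 ≤ D x) (hD1 : ∑ x, D x = 1) (hP : P ∈ stdSimplex ℝ G)
    (hmax : IsMaxOn (logBarrier D ν μ π) (stdSimplex ℝ G) P) (f : G) :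
    ν * ∑ x, D x * (1 / smoothedWeight ν μ π P x (π f x)) ≤ Fintype.card 𝒜 := by
  classical
  set δ : G → ℝ := Pi.single f 1
  have hδ : δ ∈ stdSimplex ℝ G := single_mem_stdSimplex ℝ f
  refine le_trans ?_ (sum_smoothedWeight_div_le_card hν hμ hD1 hP hmax hδ)
  rw [mul_sum]
  refine sum_le_sum fun x _ => ?_
  have hδf : smoothedWeight ν μ π δ x (π f x) = ν + μ := by
    rw [smoothedWeight, actionWeight_single_self, mul_one]
  calc ν * (D x * (1 / smoothedWeight ν μ π P x (π f x)))
      ≤ D x * (smoothedWeight ν μ π δ x (π f x) / smoothedWeight ν μ π P x (π f x)) := by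
        rw [hδf, mul_left_comm, mul_one_div]
        gcongr
        · exact hD0 x
        · exact (smoothedWeight_pos hν hμ hP.1 x _).le
        · linarith
    _ ≤ D x * ∑ a, smoothedWeight ν μ π δ x a / smoothedWeight ν μ π P x a := by
        gcongr
        · exact hD0 x
        · exact single_le_sum (fun a _ => div_nonneg (smoothedWeight_pos hν hμ hδ.1 x a).le
            (smoothedWeight_pos hν hμ hP.1 x a).le) (mem_univ _)

end LogBarrier

theorem low_variance_distribution_exists_general
    {X 𝒜 G : Type*} [Fintype X] [Fintype 𝒜] [DecidableEq 𝒜] [Fintype G] [Nonempty G]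
    (A : ℕ) (hA : A = Fintype.card 𝒜)
    (D : X → ℝ) (hD0 : ∀ x, 0 ≤ D x) (hD1 : ∑ x, D x = 1)
    (π : G → X → 𝒜)
    (μ : ℝ) (hμ : 0 < μ) (hμ' : μ ≤ 1 / (2 * A)) :
    ∃ P : G → ℝ, (∀ g, 0 ≤ P g) ∧ (∑ g, P g = 1) ∧
      ∀ f : G,
        ∑ x, D x * (1 / ((1 - A * μ) *
            (∑ g, (if π g x = π f x then P g else 0)) + μ)) ≤ 2 * A := by
  have hAμ : (A : ℝ) * μ ≤ 1 / 2 := by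
    rcases eq_or_ne (A : ℝ) 0 with hA0 | hA0
    · simp [hA0]
    · calc (A : ℝ) * μ ≤ A * (1 / (2 * A)) := by gcongr
        _ = 1 / 2 := by field_simp
  have hν : (0 : ℝ) ≤ 1 - A * μ := by linarith
  obtain ⟨P, hP, hmax⟩ := exists_isMaxOn_logBarrier (π := π) D hν hμ
  refine ⟨P, hP.1, hP.2, fun f => ?_⟩
  have hbound := mul_sum_inv_smoothedWeight_le_card hν hμ hD0 hD1 hP hmax f
  rw [← hA] at hbound
  change ∑ x, D x * (1 / smoothedWeight (1 - A * μ) μ π P x (π f x)) ≤ 2 * A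
  rcases le_or_gt 0 (∑ x, D x * (1 / smoothedWeight (1 - A * μ) μ π P x (π f x))) with hS | hS
  · nlinarith
  · linarith [(Nat.cast_nonneg A : (0 : ℝ) ≤ A)]

/-- Existence of a low-variance distribution (Dudik et al. 2011, Corollary 2): for a
finite action set of size `A`, a finite hypothesis set `G` with induced deterministic
policies `π g`, a state distribution `D` and smoothing `μ ∈ (0, 1/(2A)]`, there is a
distribution `P` over `G` with
`E_{x∼D}[ 1 / ((1 − Aμ) W_P(x, π_f(x)) + μ) ] ≤ 2A` for all `f ∈ G`, where
`W_P(x,a) = Σ_g 1[π_g(x) = a] P(g)`. -/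
theorem low_variance_distribution_exists
    {X 𝒜 G : Type*} [Fintype X] [Fintype 𝒜] [DecidableEq 𝒜] [Fintype G] [Nonempty G]
    (A : ℕ) (hA : A = Fintype.card 𝒜) (hApos : 0 < A)
    (D : X → ℝ) (hD0 : ∀ x, 0 ≤ D x) (hD1 : ∑ x, D x = 1)
    (π : G → X → 𝒜)
    (μ : ℝ) (hμ : 0 < μ) (hμ' : μ ≤ 1 / (2 * A)) :
    ∃ P : G → ℝ, (∀ g, 0 ≤ P g) ∧ (∑ g, P g = 1) ∧
      ∀ f : G,
        ∑ x, D x * (1 / ((1 - A * μ) *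
            (∑ g, (if π g x = π f x then P g else 0)) + μ)) ≤ 2 * A :=
  low_variance_distribution_exists_general A hA D hD0 hD1 π μ hμ hμ'
end

section
/- Let Π ⊆ Y^X be a hypothesis class of classifiers with |Y| = A and Natarajan dimension d_Π ≥ 6, and let V ⊆ [0,1]^X have pseudo dimension d_V ≥ 6. Then the product class H = { (x, a, x') ↦ 1[a = π(x)] · v(x') : π ∈ Π, v ∈ V } has pseudo dimension at most 6(d_Π + d_V) ln(2eA(d_Π + d_V)). -/
/-!
If `H` P-shatters `S` with thresholds `ξ`, then `ξ > 0` on `S` because `H` is nonnegative, so every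
`T ⊆ S` is cut out as `{z | a = π x ∧ ξ z ≤ v x'}` and is therefore determined by the traces on `S`
of `z ↦ π x` and of `z ↦ [ξ z ≤ v x']`. These two trace classes have Natarajan dimension at most
`dΠ` and `dV`, so by Natarajan's lemma (the multiclass Sauer–Shelah lemma)
`2 ^ m ≤ (8 m A²) ^ (dΠ + dV)` for `m = |S|`; bounding `log m` by its tangent line at
`2 (dΠ + dV) / log 2` solves this for `m`.
-/

open scoped BigOperators

/-- `H` P-shatters the finite set `S` (pseudo-shattering with thresholds). -/
def PShatters {Z : Type*} (H : Set (Z → ℝ)) (S : Finset Z) : Prop :=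
  ∃ ξ : Z → ℝ, ∀ T ⊆ S, ∃ h ∈ H, ∀ x ∈ S, (ξ x ≤ h x ↔ x ∈ T)

/-- `Π` N-shatters the finite set `S` (Natarajan shattering). -/
def NShatters {X Y : Type*} (P : Set (X → Y)) (S : Finset X) : Prop :=
  ∃ h1 ∈ P, ∃ h2 ∈ P, (∀ x ∈ S, h1 x ≠ h2 x) ∧
    ∀ T ⊆ S, ∃ h ∈ P, (∀ x ∈ S, x ∈ T → h x = h1 x) ∧ (∀ x ∈ S, x ∉ T → h x = h2 x)

section

open Finset Function

variable {X Y Z : Type*}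

theorem NShatters.of_forall_exists_eqOn {C C' : Set (X → Y)} {R : Finset X}
    (hC : ∀ f ∈ C, ∃ g ∈ C', Set.EqOn f g R) (h : NShatters C R) : NShatters C' R := by
  obtain ⟨f₁, hf₁, f₂, hf₂, hne, hT⟩ := h
  obtain ⟨g₁, hg₁, e₁⟩ := hC f₁ hf₁
  obtain ⟨g₂, hg₂, e₂⟩ := hC f₂ hf₂
  refine ⟨g₁, hg₁, g₂, hg₂, fun x hx => e₁ hx ▸ e₂ hx ▸ hne x hx, fun T hTR => ?_⟩
  obtain ⟨f, hf, h_in, h_out⟩ := hT T hTR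
  obtain ⟨g, hg, e⟩ := hC f hf
  exact ⟨g, hg, fun x hx hxT => (e hx).symm.trans ((h_in x hx hxT).trans (e₁ hx)),
    fun x hx hxT => (e hx).symm.trans ((h_out x hx hxT).trans (e₂ hx))⟩

theorem NShatters.mono {C C' : Set (X → Y)} {R : Finset X} (hC : C ⊆ C') (h : NShatters C R) :
    NShatters C' R :=
  h.of_forall_exists_eqOn fun f hf => ⟨f, hC hf, Set.eqOn_refl f _⟩

theorem NShatters.nonempty {C : Set (X → Y)} {R : Finset X} (h : NShatters C R) : C.Nonempty :=
  let ⟨f, hf, _⟩ := h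
  ⟨f, hf⟩

theorem nShatters_empty {C : Set (X → Y)} (hC : C.Nonempty) : NShatters C ∅ := by
  obtain ⟨f, hf⟩ := hC
  exact ⟨f, hf, f, hf, by simp, fun T _ => ⟨f, hf, by simp, by simp⟩⟩

theorem nShatters_insert_of_nShatters [DecidableEq X] {Φ : Set (X → Y)} {R : Finset X} {x : X}
    (hx : x ∉ R) {a b : Y} (hab : a ≠ b)
    (h : NShatters {g | (∃ f ∈ Φ, f x = a ∧ Set.EqOn f g R) ∧ ∃ f ∈ Φ, f x = b ∧ Set.EqOn f g R}
      R) :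
    NShatters Φ (insert x R) := by
  obtain ⟨g₁, ⟨⟨f₁, hf₁, hf₁x, e₁⟩, -⟩, g₂, ⟨-, ⟨f₂, hf₂, hf₂x, e₂⟩⟩, hne, hT⟩ := h
  refine ⟨f₁, hf₁, f₂, hf₂, fun z hz => ?_, fun T hTR => ?_⟩
  · rcases mem_insert.mp hz with rfl | hz
    · rwa [hf₁x, hf₂x]
    · rw [e₁ hz, e₂ hz]
      exact hne z hz
  obtain ⟨g, ⟨⟨fa, hfa, hfax, ea⟩, ⟨fb, hfb, hfbx, eb⟩⟩, g_in, g_out⟩ :=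
    hT (T.erase x) (subset_insert_iff.mp hTR)
  obtain ⟨f, hf, hfx, ef⟩ : ∃ f ∈ Φ, f x = (if x ∈ T then a else b) ∧ Set.EqOn f g R := by
    split_ifs
    exacts [⟨fa, hfa, hfax, ea⟩, ⟨fb, hfb, hfbx, eb⟩]
  refine ⟨f, hf, fun z hz hzT => ?_, fun z hz hzT => ?_⟩ <;> rcases mem_insert.mp hz with rfl | hz
  · simp [hfx, hzT, hf₁x]
  · rw [ef hz, e₁ hz]
    exact g_in z hz (mem_erase.mpr ⟨ne_of_mem_of_not_mem hz hx, hzT⟩)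
  · simp [hfx, hzT, hf₂x]
  · rw [ef hz, e₂ hz]
    exact g_out z hz fun h => hzT (mem_erase.mp h).2

theorem NShatters.injOn_of_comp {C : Set (X → Y)} {g : Z → X} {R : Finset Z}
    (h : NShatters ((· ∘ g) '' C) R) : Set.InjOn g R := by
  obtain ⟨_, ⟨f₁, -, rfl⟩, _, ⟨f₂, -, rfl⟩, hne, hT⟩ := h
  intro z hz w hw hzw
  by_contra hzw'
  obtain ⟨_, ⟨f, -, rfl⟩, h_in, h_out⟩ := hT {z} (singleton_subset_iff.mpr hz)
  have e₁ := h_in z hz (mem_singleton_self z)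
  have e₂ := h_out w hw (by simpa using Ne.symm hzw')
  have hne := hne z hz
  simp only [comp_apply, hzw] at e₁ e₂ hne
  exact hne (e₁.symm.trans e₂)

theorem NShatters.image_of_comp [DecidableEq X] {C : Set (X → Y)} {g : Z → X} {R : Finset Z}
    (h : NShatters ((· ∘ g) '' C) R) : NShatters C (R.image g) := by
  obtain ⟨_, ⟨f₁, hf₁, rfl⟩, _, ⟨f₂, hf₂, rfl⟩, hne, hT⟩ := h
  refine ⟨f₁, hf₁, f₂, hf₂, forall_mem_image.mpr hne, fun T _ => ?_⟩
  obtain ⟨_, ⟨f, hf, rfl⟩, h_in, h_out⟩ := hT (R.filter (g · ∈ T)) (filter_subset _ _)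
  refine ⟨f, hf, ?_, ?_⟩ <;> simp only [forall_mem_image]
  · exact fun z hz hzT => h_in z hz (mem_filter.mpr ⟨hz, hzT⟩)
  · exact fun z hz hzT => h_out z hz fun h => hzT (mem_filter.mp h).2

theorem NShatters.card_le_of_comp [DecidableEq X] {C : Set (X → Y)} {g : Z → X} {d : ℕ}
    (hd : ∀ S, NShatters C S → S.card ≤ d) {R : Finset Z} (h : NShatters ((· ∘ g) '' C) R) :
    R.card ≤ d :=
  card_image_of_injOn h.injOn_of_comp ▸ hd _ h.image_of_comp

theorem PShatters.injOn_of_comp {F : Set (X → ℝ)} {g : Z → X} {R : Finset Z}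
    (h : PShatters ((· ∘ g) '' F) R) : Set.InjOn g R := by
  obtain ⟨ξ, hξ⟩ := h
  intro z hz w hw hzw
  by_contra hzw'
  obtain ⟨_, ⟨f, -, rfl⟩, hf⟩ := hξ {z} (singleton_subset_iff.mpr hz)
  obtain ⟨_, ⟨f', -, rfl⟩, hf'⟩ := hξ {w} (singleton_subset_iff.mpr hw)
  have h₁ := hf z hz
  have h₂ := hf w hw
  have h₃ := hf' z hz
  have h₄ := hf' w hw
  simp only [comp_apply, hzw, mem_singleton, hzw', Ne.symm hzw', iff_true, iff_false, not_le]
    at h₁ h₂ h₃ h₄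
  linarith

theorem PShatters.image_of_comp [DecidableEq X] {F : Set (X → ℝ)} {g : Z → X} {R : Finset Z}
    (h : PShatters ((· ∘ g) '' F) R) : PShatters F (R.image g) := by
  classical
  have hg := h.injOn_of_comp
  obtain ⟨ξ, hξ⟩ := h
  refine ⟨fun x => if hx : ∃ z ∈ R, g z = x then ξ hx.choose else 0, fun T _ => ?_⟩
  obtain ⟨_, ⟨f, hf, rfl⟩, hfT⟩ := hξ (R.filter (g · ∈ T)) (filter_subset _ _)
  refine ⟨f, hf, forall_mem_image.mpr fun z hz => ?_⟩
  have hx : ∃ w ∈ R, g w = g z := ⟨z, hz, rfl⟩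
  dsimp only
  rw [dif_pos hx, hg hx.choose_spec.1 hz hx.choose_spec.2]
  simpa [hz] using hfT z hz

theorem PShatters.card_le_of_comp [DecidableEq X] {F : Set (X → ℝ)} {g : Z → X} {d : ℕ}
    (hd : ∀ S, PShatters F S → S.card ≤ d) {R : Finset Z} (h : PShatters ((· ∘ g) '' F) R) :
    R.card ≤ d :=
  card_image_of_injOn h.injOn_of_comp ▸ hd _ h.image_of_comp

theorem NShatters.exists_eq_true_iff {C : Set (Z → Bool)} {R : Finset Z} (h : NShatters C R)
    (T : Finset Z) : ∃ f ∈ C, ∀ z ∈ R, (f z = true ↔ z ∈ T) := by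
  classical
  obtain ⟨f₁, -, f₂, -, hne, hT⟩ := h
  obtain ⟨f, hf, h_in, h_out⟩ := hT (R.filter fun z => f₁ z = decide (z ∈ T)) (filter_subset _ _)
  refine ⟨f, hf, fun z hz => ?_⟩
  rw [← decide_eq_true_iff (p := z ∈ T)]
  by_cases hz₁ : f₁ z = decide (z ∈ T)
  · rw [h_in z hz (mem_filter.mpr ⟨hz, hz₁⟩), hz₁]
  · rw [h_out z hz fun h => hz₁ (mem_filter.mp h).2]
    have := hne z hz
    revert hz₁ this
    cases f₁ z <;> cases f₂ z <;> cases decide (z ∈ T) <;> simp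

def thresholdClass (ξ : Z → ℝ) (F : Set (Z → ℝ)) : Set (Z → Bool) :=
  (fun f z => decide (ξ z ≤ f z)) '' F

theorem NShatters.pShatters_of_thresholdClass {ξ : Z → ℝ} {F : Set (Z → ℝ)} {R : Finset Z}
    (h : NShatters (thresholdClass ξ F) R) : PShatters F R :=
  ⟨ξ, fun T _ =>
    let ⟨_, ⟨f, hf, hfξ⟩, hfT⟩ := h.exists_eq_true_iff T
    ⟨f, hf, fun z hz => by simpa [← hfξ] using hfT z hz⟩⟩

/-- The bound of Natarajan's lemma for classes of Natarajan dimension `< d` on `m` points with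
`A` labels; shifting the dimension by one lets the empty class (`d = 0`) obey the same recursion. -/
def natarajanBound (A m d : ℕ) : ℕ := ∑ i ∈ range d, m.choose i * A ^ (2 * i)

theorem natarajanBound_zero_succ (A d : ℕ) : natarajanBound A 0 (d + 1) = 1 := by
  simp [natarajanBound, sum_range_succ']

theorem natarajanBound_succ_succ (A m d : ℕ) :
    natarajanBound A (m + 1) (d + 1) =
      natarajanBound A m (d + 1) + A ^ 2 * natarajanBound A m d := by
  have hterm : ∀ i ∈ range d, (m + 1).choose (i + 1) * A ^ (2 * (i + 1)) =
      m.choose (i + 1) * A ^ (2 * (i + 1)) + A ^ 2 * (m.choose i * A ^ (2 * i)) := fun i _ => by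
    rw [Nat.choose_succ_succ]
    ring
  simp only [natarajanBound, sum_range_succ' _ d, sum_congr rfl hterm, sum_add_distrib, mul_sum,
    Nat.choose_zero_right]
  ring

theorem natarajanBound_le (A m d : ℕ) (h : 0 < m * A ^ 2) :
    natarajanBound A m (d + 1) ≤ (2 * m * A ^ 2) ^ d :=
  calc natarajanBound A m (d + 1)
      ≤ ∑ _i ∈ range (d + 1), (m * A ^ 2) ^ d := sum_le_sum fun i hi =>
        calc m.choose i * A ^ (2 * i) ≤ m ^ i * A ^ (2 * i) :=
              Nat.mul_le_mul_right _ (Nat.choose_le_pow m i)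
          _ = (m * A ^ 2) ^ i := by rw [mul_pow, pow_mul]
          _ ≤ (m * A ^ 2) ^ d := Nat.pow_le_pow_right h (Nat.lt_succ_iff.mp (mem_range.mp hi))
    _ = (d + 1) * (m * A ^ 2) ^ d := by rw [sum_const, card_range, smul_eq_mul]
    _ ≤ 2 ^ d * (m * A ^ 2) ^ d := Nat.mul_le_mul_right _ (Nat.lt_two_pow_self)
    _ = (2 * m * A ^ 2) ^ d := by rw [← mul_pow, mul_assoc]

theorem natarajanBound_mul_natarajanBound_two_le {A m d d' : ℕ} (hA : 0 < A) (hm : 0 < m) :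
    natarajanBound A m (d + 1) * natarajanBound 2 m (d' + 1) ≤ (8 * m * A ^ 2) ^ (d + d') := by
  have hA2 : 1 ≤ A ^ 2 := Nat.one_le_pow _ _ hA
  calc natarajanBound A m (d + 1) * natarajanBound 2 m (d' + 1)
      ≤ (2 * m * A ^ 2) ^ d * (2 * m * 2 ^ 2) ^ d' :=
        Nat.mul_le_mul (natarajanBound_le _ _ _ (by positivity))
          (natarajanBound_le _ _ _ (by positivity))
    _ ≤ (8 * m * A ^ 2) ^ d * (8 * m * A ^ 2) ^ d' := by
        gcongr (?_ : ℕ) ^ _ * (?_ : ℕ) ^ _ <;> nlinarith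
    _ = (8 * m * A ^ 2) ^ (d + d') := (pow_add _ _ _).symm

theorem card_le_one_add_card_offDiag {α : Type*} [DecidableEq α] (s : Finset α) :
    s.card ≤ 1 + s.offDiag.card := by
  rw [offDiag_card]
  rcases s.card with _ | n
  · simp
  · rw [Nat.add_mul, one_mul, Nat.add_sub_cancel]
    nlinarith

/-- Splitting `s` into the fibres of `ρ`, each fibre is counted once plus once per ordered pair
of distinct values that `φ` takes on it. -/
theorem card_le_card_image_add_sum_card_offDiag {α β γ : Type*} [DecidableEq β] [DecidableEq γ]
    [Fintype γ] (s : Finset α) (ρ : α → β) (φ : α → γ) (h : Set.InjOn (fun a => (ρ a, φ a)) s) :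
    s.card ≤ (s.image ρ).card + ∑ p : γ × γ,
      ((s.image ρ).filter fun b => p ∈ ((s.filter (ρ · = b)).image φ).offDiag).card := by
  have hφ (b : β) : Set.InjOn φ (s.filter (ρ · = b)) := fun a ha a' ha' e => by
    simp only [mem_coe, mem_filter] at ha ha'
    exact h ha.1 ha'.1 (Prod.ext (ha.2.trans ha'.2.symm) e)
  calc s.card = ∑ b ∈ s.image ρ, ((s.filter (ρ · = b)).image φ).card := by
        rw [card_eq_sum_card_image ρ s]
        exact sum_congr rfl fun b _ => (card_image_of_injOn (hφ b)).symm
    _ ≤ ∑ b ∈ s.image ρ, (1 + ((s.filter (ρ · = b)).image φ).offDiag.card) :=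
        sum_le_sum fun b _ => card_le_one_add_card_offDiag _
    _ = _ := by
        rw [sum_add_distrib, sum_const, smul_eq_mul, mul_one]
        congr 1
        refine (sum_congr rfl fun b _ => ?_).trans
          (sum_card_bipartiteAbove_eq_sum_card_bipartiteBelow (t := univ)
            (r := fun b p => p ∈ ((s.filter (ρ · = b)).image φ).offDiag))
        simp [bipartiteAbove]

/-- If two members of `Φ` with the same `ρ`-image take the values `p.1 ≠ p.2` at `x`, their
common image lies in the class of `nShatters_insert_of_nShatters`. -/
theorem NShatters.insert_of_mem_offDiag [DecidableEq X] [DecidableEq Y] [DecidableEq (X → Y)]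
    {Φ : Finset (X → Y)} {ρ : (X → Y) → X → Y} {S R : Finset X} {x : X} {p : Y × Y} (hx : x ∉ R)
    (hρ : ∀ f, Set.EqOn (ρ f) f S) (hR : R ⊆ S)
    (h : NShatters (((Φ.image ρ).filter fun g =>
      p ∈ ((Φ.filter (ρ · = g)).image (· x)).offDiag : Finset (X → Y)) : Set (X → Y)) R) :
    NShatters (Φ : Set (X → Y)) (insert x R) := by
  obtain ⟨_, hg⟩ := h.nonempty
  refine nShatters_insert_of_nShatters hx (mem_offDiag.mp (mem_filter.mp hg).2).2.2
    (h.mono fun g hg => ?_)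
  have hvalue : ∀ a ∈ (Φ.filter (ρ · = g)).image (· x), ∃ f ∈ Φ, f x = a ∧ Set.EqOn f g R := by
    simp only [forall_mem_image, mem_filter]
    rintro f ⟨hf, rfl⟩
    exact ⟨f, hf, rfl, ((hρ f).mono hR).symm⟩
  obtain ⟨h₁, h₂, -⟩ := mem_offDiag.mp (mem_filter.mp hg).2
  exact ⟨hvalue _ h₁, hvalue _ h₂⟩

theorem card_le_natarajanBound [Fintype Y] (S : Finset X)
    (d : ℕ) (Φ : Finset (X → Y)) (hΦ : ∀ f ∈ Φ, ∀ g ∈ Φ, Set.EqOn f g S → f = g)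
    (hd : ∀ R ⊆ S, NShatters (Φ : Set (X → Y)) R → R.card < d) :
    Φ.card ≤ natarajanBound (Fintype.card Y) S.card d := by
  classical
  induction S using Finset.induction_on generalizing d Φ with
  | empty =>
    rcases Φ.eq_empty_or_nonempty with rfl | hΦ₀
    · simp
    obtain ⟨d, rfl⟩ := Nat.exists_eq_add_one.mpr (hd ∅ (empty_subset _) (nShatters_empty hΦ₀))
    rw [card_empty, natarajanBound_zero_succ]
    exact card_le_one.mpr fun f hf g hg => hΦ f hf g hg (by simp)
  | insert x S hx ih =>
    rcases Φ.eq_empty_or_nonempty with rfl | ⟨g₀, hg₀⟩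
    · simp
    obtain ⟨d, rfl⟩ := Nat.exists_eq_add_one.mpr
      (hd ∅ (empty_subset _) (nShatters_empty ⟨g₀, hg₀⟩))
    -- `ρ f` forgets the value of `f` at `x`; the fibres of `ρ` are then told apart by that value.
    set ρ : (X → Y) → X → Y := fun f => S.piecewise f g₀
    have hρ (f : X → Y) : Set.EqOn (ρ f) f S := fun z hz => piecewise_eq_of_mem _ _ _ hz
    set Ψ : Y × Y → Finset (X → Y) := fun p =>
      (Φ.image ρ).filter fun g => p ∈ ((Φ.filter (ρ · = g)).image (· x)).offDiag
    have hcount := card_le_card_image_add_sum_card_offDiag Φ ρ (· x) fun f hf g hg hfg => by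
      simp only [Prod.mk.injEq] at hfg
      refine hΦ f hf g hg fun z hz => ?_
      rcases mem_insert.mp hz with rfl | hz
      · exact hfg.2
      · rw [← hρ f hz, ← hρ g hz, hfg.1]
    have hρΦ : ∀ f ∈ Φ.image ρ, ∀ g ∈ Φ.image ρ, Set.EqOn f g S → f = g := by
      simp only [forall_mem_image]
      exact fun f _ g _ hfg => S.piecewise_congr
        (fun z hz => (hρ f hz).symm.trans ((hfg hz).trans (hρ g hz))) fun _ _ => rfl
    have hΦ' : (Φ.image ρ).card ≤ natarajanBound (Fintype.card Y) S.card (d + 1) :=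
      ih _ _ hρΦ fun R hR hR' => hd R (hR.trans (subset_insert x S)) <|
        hR'.of_forall_exists_eqOn <| by
          simp only [coe_image, Set.forall_mem_image]
          exact fun f hf => ⟨f, hf, (hρ f).mono hR⟩
    have hΨ (p : Y × Y) : (Ψ p).card ≤ natarajanBound (Fintype.card Y) S.card d := by
      refine ih _ _ (fun f hf g hg => hρΦ f (mem_filter.mp hf).1 g (mem_filter.mp hg).1)
        fun R hR hR' => ?_
      have := hd _ (insert_subset_insert x hR)
        (hR'.insert_of_mem_offDiag (fun h => hx (hR h)) hρ hR)
      rwa [card_insert_of_notMem fun h => hx (hR h), Nat.add_lt_add_iff_right] at this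
    calc Φ.card ≤ (Φ.image ρ).card + ∑ p : Y × Y, (Ψ p).card := hcount
      _ ≤ natarajanBound (Fintype.card Y) S.card (d + 1) +
          ∑ _p : Y × Y, natarajanBound (Fintype.card Y) S.card d :=
        add_le_add hΦ' (sum_le_sum fun p _ => hΨ p)
      _ = natarajanBound (Fintype.card Y) (insert x S).card (d + 1) := by
        rw [sum_const, card_univ, Fintype.card_prod, card_insert_of_notMem hx,
          natarajanBound_succ_succ, smul_eq_mul, sq]

theorem exists_finset_eqOn_card_le_natarajanBound [Fintype Y] (C : Set (X → Y)) (S : Finset X)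
    (d : ℕ) (hd : ∀ R ⊆ S, NShatters C R → R.card ≤ d) :
    ∃ Φ : Finset (X → Y), (∀ f ∈ C, ∃ g ∈ Φ, Set.EqOn f g S) ∧
      Φ.card ≤ natarajanBound (Fintype.card Y) S.card (d + 1) := by
  obtain ⟨C', hC'C, hC'⟩ := Set.exists_subset_bijOn C fun f => (S : Set X).domRestrict f
  have hC'fin : C'.Finite := Set.Finite.of_finite_image (hC'.image_eq ▸ Set.toFinite _) hC'.injOn
  refine ⟨hC'fin.toFinset, fun f hf => ?_, card_le_natarajanBound S _ _ ?_ ?_⟩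
  · obtain ⟨g, hg, hgf⟩ := hC'.surjOn (Set.mem_image_of_mem _ hf)
    exact ⟨g, hC'fin.mem_toFinset.mpr hg, (Set.domRestrict_eq_domRestrict_iff.mp hgf).symm⟩
  · simp only [Set.Finite.mem_toFinset]
    exact fun f hf g hg hfg => hC'.injOn hf hg (Set.domRestrict_eq_domRestrict_iff.mpr hfg)
  · exact fun R hR hR' => Nat.lt_succ_of_le (hd R hR (hR'.mono (by simpa using hC'C)))

theorem two_pow_card_le_card_mul_card {W₁ W₂ : Type*} {S : Finset Z} {Φ₁ : Finset (Z → W₁)}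
    {Φ₂ : Finset (Z → W₂)} (r : Z → W₁ → W₂ → Prop)
    (h : ∀ T ⊆ S, ∃ g₁ ∈ Φ₁, ∃ g₂ ∈ Φ₂, ∀ z ∈ S, (r z (g₁ z) (g₂ z) ↔ z ∈ T)) :
    2 ^ S.card ≤ Φ₁.card * Φ₂.card := by
  classical
  rw [← card_powerset, ← card_product]
  refine card_le_card_of_surjOn (fun g => S.filter fun z => r z (g.1 z) (g.2 z)) fun T hT => ?_
  obtain ⟨g₁, hg₁, g₂, hg₂, hT'⟩ := h T (mem_powerset.mp hT)
  refine ⟨(g₁, g₂), mem_product.mpr ⟨hg₁, hg₂⟩, ?_⟩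
  ext z
  simp only [mem_filter]
  refine ⟨fun hz => (hT' z hz.1).mp hz.2, fun hz => ?_⟩
  have hzS := mem_powerset.mp hT hz
  exact ⟨hzS, (hT' z hzS).mpr hz⟩

def productClass [DecidableEq Y] (Pc : Set (X → Y)) (Vc : Set (X → ℝ)) : Set (X × Y × X → ℝ) :=
  {F | ∃ π ∈ Pc, ∃ v ∈ Vc, F = fun z => (if z.2.1 = π z.1 then (1 : ℝ) else 0) * v z.2.2}

/-- Since the class is nonnegative, the empty pattern forces positive thresholds, and then a
threshold is reached only where the indicator is `1`. -/
theorem exists_eq_and_le_iff_of_productClass [DecidableEq Y] {Pc : Set (X → Y)}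
    {Vc : Set (X → ℝ)} (hVc : ∀ v ∈ Vc, ∀ x, 0 ≤ v x) {S : Finset (X × Y × X)}
    {ξ : X × Y × X → ℝ} (hξ : ∀ T ⊆ S, ∃ h ∈ productClass Pc Vc, ∀ z ∈ S, (ξ z ≤ h z ↔ z ∈ T))
    (T : Finset (X × Y × X)) (hT : T ⊆ S) :
    ∃ π ∈ Pc, ∃ v ∈ Vc, ∀ z ∈ S, (z.2.1 = π z.1 ∧ ξ z ≤ v z.2.2 ↔ z ∈ T) := by
  have hξpos : ∀ z ∈ S, 0 < ξ z := by
    obtain ⟨_, ⟨π, -, v, hv, rfl⟩, h⟩ := hξ ∅ (empty_subset S)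
    intro z hz
    have := (h z hz).not.mpr (notMem_empty z)
    have := hVc v hv z.2.2
    dsimp only at *
    split_ifs at * <;> linarith
  obtain ⟨_, ⟨π, hπ, v, hv, rfl⟩, h⟩ := hξ T hT
  refine ⟨π, hπ, v, hv, fun z hz => ?_⟩
  rw [← h z hz]
  have := hξpos z hz
  dsimp only
  split_ifs with hπz
  · simp [hπz]
  · simp [hπz, not_le.mpr this]

open Real in
theorem le_six_mul_log_of_two_pow_le {m A D : ℕ} (h : 0 < m → 2 ^ m ≤ (8 * m * A ^ 2) ^ D) :
    (m : ℝ) ≤ 6 * D * log (2 * exp 1 * A * D) := by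
  rcases Nat.eq_zero_or_pos m with rfl | hm
  · rcases Nat.eq_zero_or_pos A with rfl | hA
    · simp
    rcases Nat.eq_zero_or_pos D with rfl | hD
    · simp
    have h1 : (1 : ℝ) ≤ 2 * exp 1 * A * D := by
      have : (1 : ℝ) ≤ A * D :=
        one_le_mul_of_one_le_of_one_le (by exact_mod_cast hA) (by exact_mod_cast hD)
      nlinarith [add_one_le_exp 1]
    simpa using mul_nonneg (by positivity) (log_nonneg h1)
  have h := h hm
  have h1 : 1 < (8 * m * A ^ 2) ^ D := (Nat.one_lt_two_pow hm.ne').trans_le h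
  have hD : 0 < D := Nat.pos_of_ne_zero fun hD => by simp [hD] at h1
  have hA : 0 < A := Nat.pos_of_ne_zero fun hA => by simp [hA, hD.ne'] at h1
  have hmR : (0 : ℝ) < m := by exact_mod_cast hm
  have hAR : (1 : ℝ) ≤ A := by exact_mod_cast hA
  have hDR : (1 : ℝ) ≤ D := by exact_mod_cast hD
  set c := log 2
  have hc : 2 / 3 < c := lt_trans (by norm_num) log_two_gt_d9
  have hlog : m * c ≤ D * (3 * c + log m + 2 * log A) := by
    have := log_le_log (by positivity) (by exact_mod_cast h : (2 : ℝ) ^ m ≤ (8 * m * A ^ 2) ^ D)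
    rw [log_pow, log_pow, log_mul (by positivity) (by positivity),
      log_mul (by positivity) (by positivity), log_pow, show (8 : ℝ) = 2 ^ 3 by norm_num,
      log_pow] at this
    push_cast at this
    linarith
  -- the tangent line of `log` at `2D / c`
  have htangent : D * log m ≤ m * c / 2 + D * (log (2 * D) - log c - 1) := by
    have ht : 0 < c / (2 * D) := by positivity
    have := log_le_sub_one_of_pos (mul_pos hmR ht)
    rw [log_mul hmR.ne' ht.ne', log_div (by positivity) (by positivity)] at this
    have hDt : (D : ℝ) * (m * (c / (2 * D))) = m * c / 2 := by field_simp
    nlinarith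
  have hlogc : -1 ≤ log c := by
    have := log_le_sub_one_of_pos (inv_pos.mpr (by linarith : (0 : ℝ) < c))
    rw [log_inv] at this
    have : c⁻¹ < 3 / 2 := by rw [inv_lt_comm₀] <;> linarith
    linarith
  have hmc : m * c ≤ 2 * D * (4 * c + 2 * log A + log D) := by
    rw [log_mul (by norm_num) (by positivity)] at htangent
    nlinarith
  have hgoal : log (2 * exp 1 * A * D) = c + 1 + log A + log D := by
    rw [log_mul (by positivity) (by positivity), log_mul (by positivity) (by positivity),
      log_mul (by norm_num) (by positivity), log_exp]
  rw [hgoal]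
  have hlogA := log_nonneg hAR
  have hlogD := log_nonneg hDR
  have hkey : 2 * (4 * c + 2 * log A + log D) ≤ 6 * (c + 1 + log A + log D) * c := by
    nlinarith [mul_le_mul_of_nonneg_left hc.le hlogA, mul_le_mul_of_nonneg_left hc.le hlogD]
  refine le_of_mul_le_mul_right (hmc.trans ?_) (by linarith : (0 : ℝ) < c)
  linarith [mul_le_mul_of_nonneg_left hkey (by positivity : (0 : ℝ) ≤ D)]

end

theorem product_class_pseudo_dim_general {X Y : Type*} [Fintype Y] [DecidableEq Y]
    (Pc : Set (X → Y)) (Vc : Set (X → ℝ))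
    (A dP dV : ℕ) (hA : A = Fintype.card Y)
    (hP : ∀ S : Finset X, NShatters Pc S → S.card ≤ dP)
    (hVdim : ∀ S : Finset X, PShatters Vc S → S.card ≤ dV)
    (hVrange : ∀ v ∈ Vc, ∀ x, v x ∈ Set.Icc (0 : ℝ) 1) :
    ∀ S : Finset (X × Y × X),
      PShatters {F : X × Y × X → ℝ | ∃ π ∈ Pc, ∃ v ∈ Vc,
          F = fun z => (if z.2.1 = π z.1 then (1 : ℝ) else 0) * v z.2.2} S →
      (S.card : ℝ) ≤ 6 * (dP + dV) * Real.log (2 * Real.exp 1 * A * (dP + dV)) := by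
  classical
  rintro S ⟨ξ, hξ⟩
  suffices h : 0 < S.card → 2 ^ S.card ≤ (8 * S.card * A ^ 2) ^ (dP + dV) by
    exact_mod_cast le_six_mul_log_of_two_pow_le h
  intro hS
  obtain ⟨ΦP, hΦP, hΦPcard⟩ := exists_finset_eqOn_card_le_natarajanBound
    ((· ∘ Prod.fst) '' Pc) S dP fun R _ => NShatters.card_le_of_comp hP
  obtain ⟨ΦV, hΦV, hΦVcard⟩ := exists_finset_eqOn_card_le_natarajanBound
    (thresholdClass ξ ((· ∘ fun z => z.2.2) '' Vc)) S dV fun R _ hR =>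
      hR.pShatters_of_thresholdClass.card_le_of_comp hVdim
  have hpatterns : 2 ^ S.card ≤ ΦP.card * ΦV.card := by
    refine two_pow_card_le_card_mul_card (fun z a b => z.2.1 = a ∧ b = true) fun T hT => ?_
    obtain ⟨π, hπ, v, hv, hπv⟩ := exists_eq_and_le_iff_of_productClass
      (fun v hv x => (hVrange v hv x).1) hξ T hT
    obtain ⟨g₁, hg₁, e₁⟩ := hΦP _ ⟨π, hπ, rfl⟩
    obtain ⟨g₂, hg₂, e₂⟩ := hΦV _ ⟨_, ⟨v, hv, rfl⟩, rfl⟩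
    exact ⟨g₁, hg₁, g₂, hg₂, fun z hz => by simpa [← e₁ hz, ← e₂ hz] using hπv z hz⟩
  obtain ⟨z₀, -⟩ := Finset.card_pos.mp hS
  have hA₀ : 0 < A := hA ▸ Fintype.card_pos_iff.mpr ⟨z₀.2.1⟩
  rw [← hA] at hΦPcard
  rw [Fintype.card_bool] at hΦVcard
  exact hpatterns.trans ((Nat.mul_le_mul hΦPcard hΦVcard).trans
    (natarajanBound_mul_natarajanBound_two_le hA₀ hS))

/-- Pseudo-dimension of the product class
`H = {(x,a,x') ↦ 1[a = π(x)]·v(x') : π ∈ Π, v ∈ V}`: if `Π ⊆ Y^X` has Natarajan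
dimension at most `dΠ ≥ 6` with `|Y| = A`, and `V ⊆ [0,1]^X` has pseudo dimension at
most `dV ≥ 6`, then every set P-shattered by `H` has size at most
`6(dΠ + dV) ln(2eA(dΠ + dV))`. -/
theorem product_class_pseudo_dim {X Y : Type*} [Fintype Y] [DecidableEq Y]
    (Pc : Set (X → Y)) (Vc : Set (X → ℝ))
    (A dP dV : ℕ) (hA : A = Fintype.card Y)
    (hP : ∀ S : Finset X, NShatters Pc S → S.card ≤ dP)
    (hVdim : ∀ S : Finset X, PShatters Vc S → S.card ≤ dV)
    (hVrange : ∀ v ∈ Vc, ∀ x, v x ∈ Set.Icc (0 : ℝ) 1)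
    (hdP : 6 ≤ dP) (hdV : 6 ≤ dV) :
    ∀ S : Finset (X × Y × X),
      PShatters {F : X × Y × X → ℝ | ∃ π ∈ Pc, ∃ v ∈ Vc,
          F = fun z => (if z.2.1 = π z.1 then (1 : ℝ) else 0) * v z.2.2} S →
      (S.card : ℝ) ≤ 6 * (dP + dV) * Real.log (2 * Real.exp 1 * A * (dP + dV)) :=
  product_class_pseudo_dim_general Pc Vc A dP dV hA hP hVdim hVrange
end
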